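/- arXiv:2401.04802 — 2 statements merged into one kernel-verified Lean document; each statement's English description precedes it below -/
import Mathlib

section
/- Fix Δ, λ ∈ ℕ, a finite relational language L, and a sequence (B_n)_{n≥1} of finite L-structures each of degree at most Δ. Then there is m ∈ ℕ such that for every n ≥ 1, the structure B_n has at most m λ-rare elements. (Lemma 4.12(ii) of the paper, stated semantically.) -/
/-!
In a structure of degree at most `Δ`, every point of the `λ`-ball around `b` is reached from `b`
by a word of length `λ` over the alphabet "stay, or go to the `i`-th neighbour" (`i < Δ`), so all
`λ`-neighbourhoods embed into one finite set `T`. Transporting a pointed neighbourhood to `T`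
yields a code in a finite set, and neighbourhoods with the same code are isomorphic. A rare element
`a` has at most `m_a` elements with its code in every `B n`, so summing `m_a` over one rare
representative per code bounds the number of rare elements uniformly.
-/

open FirstOrder Language

namespace PaperDefs

/-- The Gaifman graph of an `L`-structure `M`: two distinct elements are adjacent iff they
occur together in some tuple satisfying some relation of `L`. -/
def gaifman (L : FirstOrder.Language) (M : Type*) [L.Structure M] : SimpleGraph M where
  Adj a b := a ≠ b ∧ ∃ (n : ℕ) (R : L.Relations n) (c : Fin n → M),
      Structure.RelMap R c ∧ (∃ i, c i = a) ∧ (∃ j, c j = b)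
  symm := by
    constructor
    rintro a b ⟨hab, n, R, c, hR, h1, h2⟩
    exact ⟨hab.symm, n, R, c, hR, h2, h1⟩
  loopless := by
    constructor
    rintro a ⟨hab, -⟩
    exact hab rfl

/-- `dist_M(a, b) ≤ d` in the Gaifman graph: there is a walk of length at most `d`. -/
def DistLE (L : FirstOrder.Language) (M : Type*) [L.Structure M] (a b : M) (d : ℕ) : Prop :=
  ∃ w : (gaifman L M).Walk a b, w.length ≤ d

/-- The `λ`-neighbourhood of a set `s`: all elements within Gaifman distance `λ`
of some member of `s`. -/
def nbhd (L : FirstOrder.Language) (M : Type*) [L.Structure M] (lam : ℕ) (s : Set M) :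
    Set M :=
  {c | ∃ a ∈ s, DistLE L M c a lam}

/-- `f` is an isomorphism between the substructures induced on `S` and on `T`
(for a relational language). -/
def IsInducedIso (L : FirstOrder.Language) {M N : Type*} [L.Structure M] [L.Structure N]
    (S : Set M) (T : Set N) (f : ↥S ≃ ↥T) : Prop :=
  ∀ (n : ℕ) (R : L.Relations n) (x : Fin n → ↥S),
    Structure.RelMap R (fun i => ((x i : M))) ↔ Structure.RelMap R (fun i => ((f (x i) : N)))

/-- `a ∈ B n` is `λ`-rare (with respect to the family `B`): for some `m`, every `B n'`
contains at most `m` elements `b` whose pointed `λ`-neighbourhood is isomorphic to that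
of `a`. -/
def Rare (L : FirstOrder.Language) (B : ℕ → Type*) [∀ n, L.Structure (B n)]
    (lam : ℕ) (n : ℕ) (a : B n) : Prop :=
  ∃ m : ℕ, ∀ n' : ℕ,
    ({b : B n' |
        ∃ f : ↥(nbhd L (B n') lam {b}) ≃ ↥(nbhd L (B n) lam {a}),
          IsInducedIso L (nbhd L (B n') lam {b}) (nbhd L (B n) lam {a}) f ∧
          ∀ hb : b ∈ nbhd L (B n') lam {b}, (↑(f ⟨b, hb⟩) : B n) = a}).ncard ≤ m

/-- The `λ`-closure of a set `s ⊆ B n`: the `λ`-neighbourhood of `s` together with all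
`λ`-rare elements of `B n`. -/
def closureSet (L : FirstOrder.Language) (B : ℕ → Type*) [∀ n, L.Structure (B n)]
    (lam : ℕ) (n : ℕ) (s : Set (B n)) : Set (B n) :=
  nbhd L (B n) lam (s ∪ {a | Rare L B lam n a})

section BoundedDegree

variable {V : Type*} {G : SimpleGraph V} {Δ : ℕ}

lemma exists_fin_cover_of_encard_le {s : Set V} (hs : s.encard ≤ Δ) (v : V) :
    ∃ f : Fin Δ → V, s ⊆ Set.range f := by
  obtain ⟨hfin, hcard⟩ := Set.encard_le_coe_iff_finite_ncard_le.mp hs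
  have : Fintype s := hfin.fintype
  obtain ⟨e⟩ : Nonempty (s ↪ Fin Δ) :=
    Function.Embedding.nonempty_of_card_le <| by
      rwa [Fintype.card_fin, ← Nat.card_eq_fintype_card, Nat.card_coe_set_eq]
  refine ⟨Function.extend e Subtype.val fun _ => v, fun x hx => ⟨e ⟨x, hx⟩, ?_⟩⟩
  exact e.injective.extend_apply _ _ ⟨x, hx⟩

def followWord (σ : V → Fin Δ → V) : V → List (Option (Fin Δ)) → V :=
  List.foldl fun v o => o.elim v (σ v)

lemma followWord_replicate_none (σ : V → Fin Δ → V) (v : V) (k : ℕ) :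
    followWord σ v (List.replicate k none) = v := by
  induction k with
  | zero => rfl
  | succ k ih => exact ih

lemma exists_followWord_eq_of_walk {σ : V → Fin Δ → V}
    (hσ : ∀ v, G.neighborSet v ⊆ Set.range (σ v)) {v w : V} (p : G.Walk v w) :
    ∀ {k : ℕ}, p.length ≤ k → ∃ l, l.length = k ∧ followWord σ v l = w := by
  induction p with
  | nil => exact fun {k} _ => ⟨List.replicate k none, by simp, followWord_replicate_none σ _ k⟩
  | @cons u x w hux p ih =>
    intro k hk
    obtain ⟨k, rfl⟩ : ∃ k', k = k' + 1 := ⟨k - 1, by simp at hk; omega⟩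
    obtain ⟨l, hl, hfollow⟩ := ih (k := k) (by simpa using hk)
    obtain ⟨i, hi⟩ := hσ u hux
    exact ⟨some i :: l, by simp [hl], by simpa [followWord, hi] using hfollow⟩

lemma nonempty_ball_embedding (hdeg : ∀ v, (G.neighborSet v).encard ≤ Δ) (lam : ℕ) (b : V) :
    Nonempty ({c | ∃ p : G.Walk c b, p.length ≤ lam} ↪
      List.Vector (Option (Fin Δ)) lam) := by
  choose σ hσ using fun v => exists_fin_cover_of_encard_le (hdeg v) v
  let word : List.Vector (Option (Fin Δ)) lam → V := fun l => followWord σ b l.toList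
  have hball : {c | ∃ p : G.Walk c b, p.length ≤ lam} ⊆ Set.range word := by
    rintro c ⟨p, hp⟩
    obtain ⟨l, hl, hfollow⟩ := exists_followWord_eq_of_walk hσ p.reverse (by simpa using hp)
    exact ⟨⟨l, hl⟩, hfollow⟩
  exact ⟨(Set.embeddingOfSubset _ _ hball).trans
    ⟨Set.rangeSplitting word, Set.rangeSplitting_injective word⟩⟩

end BoundedDegree

lemma mem_nbhd_singleton_self (L : Language) {M : Type*} [L.Structure M] (lam : ℕ) (b : M) :
    b ∈ nbhd L M lam {b} :=
  ⟨b, rfl, .nil, Nat.zero_le _⟩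

lemma nonempty_nbhd_singleton_embedding (L : Language) {M : Type*} [L.Structure M] {Δ : ℕ}
    (hdeg : ∀ v, ((gaifman L M).neighborSet v).encard ≤ Δ) (lam : ℕ) (b : M) :
    Nonempty (nbhd L M lam {b} ↪ List.Vector (Option (Fin Δ)) lam) := by
  have hnbhd : nbhd L M lam {b} = {c | ∃ p : (gaifman L M).Walk c b, p.length ≤ lam} := by
    ext c
    simp [nbhd, DistLE]
  rw [hnbhd]
  exact nonempty_ball_embedding hdeg lam b

section InducedCode

variable (L : Language) {M N T : Type*} [L.Structure M] [L.Structure N]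

def inducedCode {S : Set M} (e : S ↪ T) (a : S) :
    Set T × (∀ p : Σ k, L.Relations k, Set (Fin p.1 → T)) × T :=
  (Set.range e, fun p => (fun x => e ∘ x) '' {x | Structure.RelMap p.2 (Subtype.val ∘ x)}, e a)

lemma exists_isInducedIso_of_inducedCode_eq {S : Set M} {S' : Set N} (e : S ↪ T) (e' : S' ↪ T)
    {a : S} {a' : S'} (h : inducedCode L e a = inducedCode L e' a') :
    ∃ f : S ≃ S', IsInducedIso L S S' f ∧ f a = a' := by
  simp only [inducedCode, Prod.mk.injEq] at h
  obtain ⟨hrange, hrel, hpoint⟩ := h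
  let f : S ≃ S' := (Equiv.ofInjective e e.injective).trans
    ((Equiv.setCongr hrange).trans (Equiv.ofInjective e' e'.injective).symm)
  have hf : ∀ y, e' (f y) = e y := fun y => Equiv.apply_ofInjective_symm e'.injective _
  refine ⟨f, fun k R x => ?_, e'.injective (by rw [hf, hpoint])⟩
  have hcomp : e ∘ x = e' ∘ (f ∘ x) := funext fun i => (hf (x i)).symm
  calc Structure.RelMap R (Subtype.val ∘ x)
      ↔ e ∘ x ∈ (fun y => e ∘ y) '' {y | Structure.RelMap R (Subtype.val ∘ y)} :=
        ((Function.Injective.comp_left (α := Fin k) e.injective).mem_set_image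
          (s := {y | Structure.RelMap R (Subtype.val ∘ y)}) (a := x)).symm
    _ ↔ e' ∘ (f ∘ x) ∈ (fun y => e' ∘ y) '' {y | Structure.RelMap R (Subtype.val ∘ y)} :=
        by rw [hcomp, ← congrFun hrel ⟨k, R⟩]
    _ ↔ Structure.RelMap R (Subtype.val ∘ (f ∘ x)) :=
        (Function.Injective.comp_left (α := Fin k) e'.injective).mem_set_image

end InducedCode

lemma exists_forall_ncard_le_of_code {ι C : Type*} [Finite C] {X : ι → Type*}
    (P : ∀ i, Set (X i)) (c : ∀ i, X i → C)
    (h : ∀ i, ∀ a ∈ P i, ∃ m, ∀ j, {b ∈ P j | c j b = c i a}.ncard ≤ m) :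
    ∃ m, ∀ i, (P i).ncard ≤ m := by
  have hfiber : ∀ k : C, ∃ m, ∀ j, {b ∈ P j | c j b = k}.ncard ≤ m := by
    intro k
    by_cases hk : ∃ i, ∃ a ∈ P i, c i a = k
    · obtain ⟨i, a, ha, rfl⟩ := hk
      exact h i a ha
    · refine ⟨0, fun j => ?_⟩
      have hempty : {b ∈ P j | c j b = k} = ∅ :=
        Set.eq_empty_of_forall_notMem fun b hb => hk ⟨j, b, hb⟩
      simp [hempty]
  choose bound hbound using hfiber
  have := Fintype.ofFinite C
  refine ⟨∑ k, bound k, fun i => ?_⟩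
  calc (P i).ncard = (⋃ k, {b ∈ P i | c i b = k}).ncard := by
        congr 1
        ext b
        simp
    _ ≤ ∑ k, {b ∈ P i | c i b = k}.ncard := Set.ncard_iUnion_le_of_fintype _
    _ ≤ ∑ k, bound k := Finset.sum_le_sum fun k _ => hbound k i

theorem stmt11_general (L : FirstOrder.Language) [Finite L.Symbols]
    (Δ lam : ℕ) (B : ℕ → Type*) [∀ n, L.Structure (B n)] [∀ n, Fintype (B n)]
    (hdeg : ∀ (n : ℕ) (v : B n), ((gaifman L (B n)).neighborSet v).encard ≤ (Δ : ℕ∞)) :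
    ∃ m : ℕ, ∀ n : ℕ, ({a : B n | Rare L B lam n a}).ncard ≤ m := by
  have : Finite (Σ k, L.Relations k) := Finite.sum_right (Σ k, L.Functions k)
  let e n (b : B n) := (nonempty_nbhd_singleton_embedding L (hdeg n) lam b).some
  let code n (b : B n) := inducedCode L (e n b) ⟨b, mem_nbhd_singleton_self L lam b⟩
  refine exists_forall_ncard_le_of_code (fun n => {a | Rare L B lam n a}) code ?_
  rintro n a ⟨m, hm⟩
  refine ⟨m, fun n' => (Set.ncard_le_ncard ?_ (Set.toFinite _)).trans (hm n')⟩
  rintro b ⟨-, hb⟩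
  obtain ⟨f, hf, hfb⟩ := exists_isInducedIso_of_inducedCode_eq L (e n' b) (e n a) hb
  exact ⟨f, hf, fun _ => congrArg Subtype.val hfb⟩

/-- Lemma 4.12(ii) of the paper, stated semantically.
Fix `Δ, λ ∈ ℕ`, a finite relational language `L`, and a sequence of finite
`L`-structures `B n`, each of degree at most `Δ`.  Then there is `m` such that every
`B n` has at most `m` `λ`-rare elements. -/
theorem stmt11 (L : FirstOrder.Language) [L.IsRelational] [Finite L.Symbols]
    (Δ lam : ℕ) (B : ℕ → Type*) [∀ n, L.Structure (B n)] [∀ n, Fintype (B n)]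
    (hdeg : ∀ (n : ℕ) (v : B n), ((gaifman L (B n)).neighborSet v).encard ≤ (Δ : ℕ∞)) :
    ∃ m : ℕ, ∀ n : ℕ, ({a : B n | Rare L B lam n a}).ncard ≤ m :=
  stmt11_general L Δ lam B hdeg

end PaperDefs
end

section
/- Fix Δ, λ ∈ ℕ, a finite relational language L, and a sequence (B_n)_{n≥1} of finite L-structures each of degree at most Δ. Then there is a first-order L-formula φ(x) in one free variable such that for every n ≥ 1 and every element a of B_n: B_n satisfies φ(a) if and only if a is λ-rare. (The first-order part of Lemma 4.12(i) of the paper.) -/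
open FirstOrder Language

namespace PaperDefs

/-! Under the degree bound every pointed `λ`-neighbourhood has at most `(Δ + 1) ^ λ` elements,
so there are only finitely many of them up to isomorphism, and each isomorphism type is defined
by a first-order formula: enumerate the neighbourhood without repetition, say that nothing else
is within distance `λ`, and fix the relation table. Rarity depends only on the isomorphism type
of the pointed neighbourhood, so `φ` is the disjunction of the formulas of the types realised by
rare elements. -/

section Distance

variable {L : FirstOrder.Language} {M : Type*} [L.Structure M]

lemma distLE_refl (a : M) (d : ℕ) : DistLE L M a a d := ⟨.nil, Nat.zero_le d⟩

lemma distLE_zero {a b : M} : DistLE L M a b 0 ↔ a = b := by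
  refine ⟨fun ⟨w, hw⟩ => ?_, fun h => h ▸ distLE_refl a 0⟩
  cases w with
  | nil => rfl
  | cons _ w => simp at hw

lemma distLE_succ {a b : M} {d : ℕ} :
    DistLE L M a b (d + 1) ↔
      DistLE L M a b d ∨ ∃ z, (gaifman L M).Adj a z ∧ DistLE L M z b d := by
  constructor
  · rintro ⟨w, hw⟩
    cases w with
    | nil => exact .inl (distLE_refl _ d)
    | cons h w => exact .inr ⟨_, h, w, by simpa using hw⟩
  · rintro (⟨w, hw⟩ | ⟨z, hz, w, hw⟩)
    · exact ⟨w, hw.trans d.le_succ⟩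
    · exact ⟨.cons hz w, by simpa using hw⟩

@[simp]
lemma mem_nbhd_singleton {lam : ℕ} {a c : M} : c ∈ nbhd L M lam {a} ↔ DistLE L M c a lam := by
  simp [nbhd]

lemma mem_nbhd_self (lam : ℕ) (a : M) : a ∈ nbhd L M lam {a} :=
  mem_nbhd_singleton.2 (distLE_refl a lam)

lemma encard_nbhd_singleton_le {Δ : ℕ}
    (hdeg : ∀ v : M, ((gaifman L M).neighborSet v).encard ≤ Δ) (a : M) :
    ∀ d, (nbhd L M d {a}).encard ≤ ((Δ + 1) ^ d : ℕ)
  | 0 => by simp [Set.encard_le_one_iff, distLE_zero]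
  | d + 1 => by
    have ih := encard_nbhd_singleton_le hdeg a d
    have hfin : (nbhd L M d {a}).Finite := Set.finite_of_encard_le_coe ih
    have hsub : nbhd L M (d + 1) {a} ⊆
        ⋃ z ∈ hfin.toFinset, insert z ((gaifman L M).neighborSet z) := by
      intro c hc
      simp only [Set.mem_iUnion, Set.Finite.mem_toFinset, mem_nbhd_singleton, Set.mem_insert_iff,
        SimpleGraph.mem_neighborSet, exists_prop]
      rcases distLE_succ.1 (mem_nbhd_singleton.1 hc) with hcd | ⟨z, hcz, hz⟩
      · exact ⟨c, hcd, .inl rfl⟩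
      · exact ⟨z, hz, .inr hcz.symm⟩
    calc (nbhd L M (d + 1) {a}).encard
        ≤ ∑ z ∈ hfin.toFinset, (insert z ((gaifman L M).neighborSet z)).encard :=
          (Set.encard_le_encard hsub).trans (Finset.set_encard_biUnion_le _ _)
      _ ≤ ∑ _z ∈ hfin.toFinset, ((Δ : ℕ∞) + 1) :=
          Finset.sum_le_sum fun z _ => (Set.encard_insert_le _ z).trans (by gcongr; exact hdeg z)
      _ = (nbhd L M d {a}).encard * (Δ + 1) := by
          rw [Finset.sum_const, nsmul_eq_mul, hfin.encard_eq_coe_toFinset_card]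
      _ ≤ ((Δ + 1) ^ d : ℕ) * (Δ + 1) := by gcongr
      _ = ((Δ + 1) ^ (d + 1) : ℕ) := by push_cast; ring

end Distance

section PointedNbhdIso

variable (L : FirstOrder.Language) {M N P : Type*} [L.Structure M] [L.Structure N]
  [L.Structure P]

def PointedNbhdIso (lam : ℕ) (b : M) (a : N) : Prop :=
  ∃ f : ↥(nbhd L M lam {b}) ≃ ↥(nbhd L N lam {a}),
    IsInducedIso L (nbhd L M lam {b}) (nbhd L N lam {a}) f ∧
    ∀ hb : b ∈ nbhd L M lam {b}, (↑(f ⟨b, hb⟩) : N) = a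

variable {L} {lam : ℕ}

lemma PointedNbhdIso.symm {b : M} {a : N} (h : PointedNbhdIso L lam b a) :
    PointedNbhdIso L lam a b := by
  obtain ⟨f, hf, hfb⟩ := h
  refine ⟨f.symm, fun n R x => ?_, fun ha => ?_⟩
  · simpa using (hf n R (f.symm ∘ x)).symm
  · have : f ⟨b, mem_nbhd_self lam b⟩ = ⟨a, ha⟩ := Subtype.ext (hfb _)
    rw [← this, Equiv.symm_apply_apply]

lemma PointedNbhdIso.trans {c : M} {b : N} {a : P} (h₁ : PointedNbhdIso L lam c b)
    (h₂ : PointedNbhdIso L lam b a) : PointedNbhdIso L lam c a := by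
  obtain ⟨f, hf, hfc⟩ := h₁
  obtain ⟨g, hg, hgb⟩ := h₂
  refine ⟨f.trans g, fun n R x => (hf n R x).trans (hg n R (f ∘ x)), fun hc => ?_⟩
  have : f ⟨c, hc⟩ = ⟨b, mem_nbhd_self lam b⟩ := Subtype.ext (hfc _)
  simp only [Equiv.trans_apply, this]
  exact hgb _

lemma rare_iff_ncard_pointedNbhdIso_le {B : ℕ → Type*} [∀ n, L.Structure (B n)] {n : ℕ}
    {a : B n} : Rare L B lam n a ↔ ∃ m, ∀ n', {b : B n' | PointedNbhdIso L lam b a}.ncard ≤ m :=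
  Iff.rfl

lemma rare_iff_of_pointedNbhdIso {B : ℕ → Type*} [∀ n, L.Structure (B n)] {n₁ n₂ : ℕ}
    {a₁ : B n₁} {a₂ : B n₂} (h : PointedNbhdIso L lam a₁ a₂) :
    Rare L B lam n₁ a₁ ↔ Rare L B lam n₂ a₂ := by
  have hclass (n' : ℕ) : {b : B n' | PointedNbhdIso L lam b a₁} =
      {b : B n' | PointedNbhdIso L lam b a₂} :=
    Set.ext fun b => ⟨fun hb => hb.trans h, fun hb => hb.trans h.symm⟩
  simp only [rare_iff_ncard_pointedNbhdIso_le, hclass]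

end PointedNbhdIso

section Formulas

variable (L : FirstOrder.Language) [Finite L.Symbols]

instance : Finite (Σ l, L.Relations l) :=
  have : Finite ((Σ l, L.Functions l) ⊕ Σ l, L.Relations l) := ‹Finite L.Symbols›
  Finite.sum_right (Σ l, L.Functions l)

noncomputable def adjFormula : L.Formula (Fin 2) :=
  ∼(Term.equal (.var 0) (.var 1)) ⊓
    Formula.iSup fun s : Σ l, L.Relations l =>
      Formula.iExs (Fin s.1)
        (s.2.formula (fun i => .var (.inr i)) ⊓
          Formula.iSup (fun i => Term.equal (.var (.inr i)) (.var (.inl 0))) ⊓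
          Formula.iSup (fun j => Term.equal (.var (.inr j)) (.var (.inl 1))))

noncomputable def distLEFormula : ℕ → L.Formula (Fin 2)
  | 0 => Term.equal (.var 0) (.var 1)
  | d + 1 => distLEFormula d ⊔ Formula.iExs Unit
      ((adjFormula L).relabel ![.inl 0, .inr ()] ⊓
        (distLEFormula d).relabel ![.inr (), .inl 1])

variable {L} {M : Type*} [L.Structure M]

@[simp]
lemma realize_adjFormula (v : Fin 2 → M) :
    (adjFormula L).Realize v ↔ (gaifman L M).Adj (v 0) (v 1) := by
  simp [adjFormula, gaifman, Sigma.exists, and_assoc]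

@[simp]
lemma realize_distLEFormula (v : Fin 2 → M) :
    ∀ d, (distLEFormula L d).Realize v ↔ DistLE L M (v 0) (v 1) d
  | 0 => by simp [distLEFormula, distLE_zero]
  | d + 1 => by
    simp [distLEFormula, realize_distLEFormula, distLE_succ,
      (Equiv.funUnique Unit M).exists_congr_left]

end Formulas

section Diagrams

variable (L : FirstOrder.Language)

noncomputable def distinctFormula (ι : Type*) [Finite ι] : L.Formula ι :=
  Formula.iInf fun p : {p : ι × ι // p.1 ≠ p.2} => ∼(Term.equal (.var p.1.1) (.var p.1.2))

variable {L} {M : Type*} [L.Structure M]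

@[simp]
lemma realize_distinctFormula {ι : Type*} [Finite ι] (v : ι → M) :
    (distinctFormula L ι).Realize v ↔ Function.Injective v := by
  simp [distinctFormula, Function.Injective, not_imp_not]

variable (L) [Finite L.Symbols]

noncomputable def relTableFormula {ι : Type*} [Finite ι]
    (D : ∀ s : Σ l, L.Relations l, (Fin s.1 → ι) → Bool) : L.Formula ι :=
  Formula.iInf fun st : Σ s : Σ l, L.Relations l, Fin s.1 → ι =>
    if D st.1 st.2 then st.1.2.formula (fun j => .var (st.2 j))
    else ∼(st.1.2.formula (fun j => .var (st.2 j)))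

noncomputable def nbhdEnumFormula (lam k : ℕ) : L.Formula (Fin 1 ⊕ Fin k) :=
  Formula.iInf (fun i => (distLEFormula L lam).relabel ![.inr i, .inl 0]) ⊓
    Formula.iAlls Unit (((distLEFormula L lam).relabel ![.inr (), .inl (.inl 0)]).imp
      (Formula.iSup fun i => Term.equal (.var (.inl (.inr i))) (.var (.inr ()))))

variable {L}

@[simp]
lemma realize_relTableFormula {ι : Type*} [Finite ι]
    (D : ∀ s : Σ l, L.Relations l, (Fin s.1 → ι) → Bool) (v : ι → M) :
    (relTableFormula L D).Realize v ↔
      ∀ s t, Structure.RelMap s.2 (v ∘ t) ↔ D s t := by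
  simp only [relTableFormula, Formula.realize_iInf, Sigma.forall]
  refine forall_congr' fun l => forall_congr' fun R => forall_congr' fun t => ?_
  cases D ⟨l, R⟩ t <;> simp [Function.comp_def]

@[simp]
lemma realize_nbhdEnumFormula {lam k : ℕ} (a : M) (ys : Fin k → M) :
    (nbhdEnumFormula L lam k).Realize (Sum.elim (fun _ => a) ys) ↔
      Set.range ys = nbhd L M lam {a} := by
  simp [nbhdEnumFormula, Set.Subset.antisymm_iff, Set.subset_def,
    (Equiv.funUnique Unit M).forall_congr_left]

end Diagrams

/-- Isomorphism types of pointed `L`-structures with at most `K` elements, presented as relation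
tables on `Fin size`. -/
structure PointedDiagram (L : FirstOrder.Language) (K : ℕ) where
  size : Fin (K + 1)
  point : Fin size
  rel : ∀ s : Σ l, L.Relations l, (Fin s.1 → Fin size) → Bool

namespace PointedDiagram

variable {L : FirstOrder.Language} {K : ℕ}

instance [Finite L.Symbols] : Finite (PointedDiagram L K) := by
  refine Finite.of_injective
    (fun c : PointedDiagram L K =>
      (⟨c.size, c.point, c.rel⟩ :
        Σ k : Fin (K + 1), Fin k × (∀ s : Σ l, L.Relations l, (Fin s.1 → Fin k) → Bool)))
    ?_
  rintro ⟨k, p, r⟩ ⟨k', p', r'⟩ h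
  obtain ⟨rfl, h⟩ := Sigma.mk.inj_iff.1 h
  obtain ⟨rfl, rfl⟩ := Prod.mk.inj (eq_of_heq h)
  rfl

variable {M N : Type*} [L.Structure M] [L.Structure N]

def Describes (c : PointedDiagram L K) (lam : ℕ) (a : M) : Prop :=
  ∃ ys : Fin c.size → M, Function.Injective ys ∧ Set.range ys = nbhd L M lam {a} ∧
    ys c.point = a ∧ ∀ s t, Structure.RelMap s.2 (ys ∘ t) ↔ c.rel s t

noncomputable def formula [Finite L.Symbols] (c : PointedDiagram L K) (lam : ℕ) :
    L.Formula (Fin 1) :=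
  Formula.iExs (Fin c.size)
    ((distinctFormula L _).relabel Sum.inr ⊓ nbhdEnumFormula L lam c.size ⊓
      Term.equal (.var (.inr c.point)) (.var (.inl 0)) ⊓
      (relTableFormula L c.rel).relabel Sum.inr)

lemma realize_formula [Finite L.Symbols] (c : PointedDiagram L K) (lam : ℕ) (a : M) :
    (c.formula lam).Realize (fun _ => a) ↔ c.Describes lam a := by
  simp [formula, Describes, and_assoc]

lemma exists_describes {lam : ℕ} (a : M) (hK : (nbhd L M lam {a}).encard ≤ K) :
    ∃ c : PointedDiagram L K, c.Describes lam a := by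
  classical
  obtain ⟨hfin, hcard⟩ := Set.encard_le_coe_iff_finite_ncard_le.1 hK
  have := hfin.to_subtype
  let e := Finite.equivFin (nbhd L M lam {a})
  let ys i : M := e.symm i
  refine ⟨⟨⟨_, Nat.lt_succ_of_le hcard⟩, e ⟨a, mem_nbhd_self lam a⟩,
    fun s t => Structure.RelMap s.2 (ys ∘ t)⟩, ys, ?_, ?_, ?_, ?_⟩
  · exact Subtype.val_injective.comp e.symm.injective
  · exact e.symm.surjective.range_comp _ |>.trans Subtype.range_coe
  · exact congrArg Subtype.val (e.symm_apply_apply _)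
  · simp

lemma Describes.pointedNbhdIso {c : PointedDiagram L K} {lam : ℕ} {b : M} {a : N}
    (hb : c.Describes lam b) (ha : c.Describes lam a) : PointedNbhdIso L lam b a := by
  obtain ⟨zs, hzs, hzs_range, hzs_point, hzs_rel⟩ := hb
  obtain ⟨ys, hys, hys_range, hys_point, hys_rel⟩ := ha
  let eb := (Equiv.ofInjective zs hzs).trans (Equiv.setCongr hzs_range)
  let ea := (Equiv.ofInjective ys hys).trans (Equiv.setCongr hys_range)
  refine ⟨eb.symm.trans ea, fun n R x => ?_, fun hmem => ?_⟩
  · have hx : (fun i => (x i : M)) = zs ∘ (eb.symm ∘ x) :=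
      funext fun i => (congrArg Subtype.val (eb.apply_symm_apply (x i))).symm
    rw [hx, hzs_rel ⟨n, R⟩, ← hys_rel ⟨n, R⟩]
    rfl
  · have : eb c.point = ⟨b, hmem⟩ := Subtype.ext (by simpa [eb] using hzs_point)
    simp [← this, ea, hys_point]

end PointedDiagram

theorem stmt12_general (L : FirstOrder.Language) [Finite L.Symbols]
    (Δ lam : ℕ) (B : ℕ → Type*) [∀ n, L.Structure (B n)]
    (hdeg : ∀ (n : ℕ) (v : B n), ((gaifman L (B n)).neighborSet v).encard ≤ (Δ : ℕ∞)) :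
    ∃ φ : L.Formula (Fin 1), ∀ (n : ℕ) (a : B n),
      φ.Realize (fun _ => a) ↔ Rare L B lam n a := by
  let RareDiagram := {c : PointedDiagram L ((Δ + 1) ^ lam) //
    ∃ (n : ℕ) (a : B n), c.Describes lam a ∧ Rare L B lam n a}
  refine ⟨Formula.iSup fun c : RareDiagram => c.1.formula lam, fun n a => ?_⟩
  simp only [Formula.realize_iSup, PointedDiagram.realize_formula]
  constructor
  · rintro ⟨⟨c, n₀, a₀, hc₀, hrare⟩, hc⟩
    exact (rare_iff_of_pointedNbhdIso (hc.pointedNbhdIso hc₀)).2 hrare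
  · intro hrare
    obtain ⟨c, hc⟩ := PointedDiagram.exists_describes a (encard_nbhd_singleton_le (hdeg n) a lam)
    exact ⟨⟨c, n, a, hc, hrare⟩, hc⟩

/-- the first-order part of Lemma 4.12(i) of the paper.
Fix `Δ, λ ∈ ℕ`, a finite relational language `L`, and a sequence of finite
`L`-structures `B n`, each of degree at most `Δ`.  Then there is a first-order formula
`φ(x)` such that for every `n` and every `a ∈ B n`: `B n ⊨ φ(a)` iff `a` is `λ`-rare. -/
theorem stmt12 (L : FirstOrder.Language) [L.IsRelational] [Finite L.Symbols]
    (Δ lam : ℕ) (B : ℕ → Type*) [∀ n, L.Structure (B n)] [∀ n, Fintype (B n)]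
    (hdeg : ∀ (n : ℕ) (v : B n), ((gaifman L (B n)).neighborSet v).encard ≤ (Δ : ℕ∞)) :
    ∃ φ : L.Formula (Fin 1), ∀ (n : ℕ) (a : B n),
      φ.Realize (fun _ => a) ↔ Rare L B lam n a :=
  stmt12_general L Δ lam B hdeg

end PaperDefs
end
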